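/- arXiv:1908.09941 — 2 statements merged into one kernel-verified Lean document; each statement's English description precedes it below -/
import Mathlib

section
/- Let f : ℝ^d → ℝ be differentiable with (L, v)-Hölder continuous gradient, v ∈ (0,1], L > 0. Then its convex conjugate f* is (ϱ, p)-uniformly convex with p = 1 + 1/v and ϱ = (2v/(1+v))·(1/L)^{1/v}, i.e., for all u, u' in the domain of f* and any subgradient x ∈ ∂f*(u'), f*(u) - f*(u') ≥ ⟨x, u - u'⟩ + (ϱ/2)‖u - u'‖^p. -/
open RealInnerProductSpace

variable {E : Type*} [NormedAddCommGroup E] [InnerProductSpace ℝ E] [CompleteSpace E]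

/-- Chain rule along a line. -/
lemma line_hasDerivAt {f : E → ℝ} {g : E} (x e : E) (t : ℝ)
    (h : HasGradientAt f g (x + t • e)) :
    HasDerivAt (fun s : ℝ => f (x + s • e)) ⟪g, e⟫ t := by
  have hφ : HasDerivAt (fun s : ℝ => x + s • e) e t := by
    simpa using ((hasDerivAt_id t).smul_const e).const_add x
  have hf := (hasGradientAt_iff_hasFDerivAt.1 h).comp_hasDerivAt t hφ
  exact hf

/-- Gradient inequality for convex functions. -/
lemma grad_ineq {f : E → ℝ} {f' : E → E} (hconv : ConvexOn ℝ Set.univ f)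
    (hdiff : ∀ z, HasGradientAt f (f' z) z) (x y : E) :
    f x + ⟪f' x, y - x⟫ ≤ f y := by
  set e := y - x
  have key : ∀ s : ℝ, x + s • e = AffineMap.lineMap x y s := by
    intro s
    simp [AffineMap.lineMap_apply, e]
    abel
  have gconv : ConvexOn ℝ Set.univ (fun s : ℝ => f (x + s • e)) := by
    have := hconv.comp_affineMap (AffineMap.lineMap x y : ℝ →ᵃ[ℝ] E)
    have hfe : (fun s : ℝ => f (x + s • e)) = f ∘ AffineMap.lineMap x y := by
      funext s; simp only [Function.comp, key]
    rw [hfe]; exact this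
  have hd : HasDerivAt (fun s : ℝ => f (x + s • e)) ⟪f' x, e⟫ 0 := by
    have := line_hasDerivAt (f := f) x e 0 (by simpa using hdiff x)
    exact this
  have := gconv.le_slope_of_hasDerivAt (Set.mem_univ (0:ℝ)) (Set.mem_univ (1:ℝ))
    one_pos hd
  rw [slope_def_field] at this
  simp only [zero_smul, add_zero, one_smul] at this
  have h1 : x + e = y := by simp [e]
  rw [h1] at this
  linarith [this]


/-- Subgradient uniqueness at a point of differentiability. -/
lemma subgrad_eq {f : E → ℝ} {g u' x : E} (h : HasGradientAt f g x)
    (hineq : ∀ y, f x + ⟪u', y - x⟫ ≤ f y) : u' = g := by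
  set e := u' - g with he
  have hψ : HasDerivAt (fun t : ℝ => f (x + t • e) - t * ⟪u', e⟫) (⟪g, e⟫ - ⟪u', e⟫) 0 := by
    have h1 := line_hasDerivAt (f := f) x e 0 (by simpa using h)
    exact h1.sub (hasDerivAt_mul_const ⟪u', e⟫)
  have hmin : IsLocalMin (fun t : ℝ => f (x + t • e) - t * ⟪u', e⟫) 0 := by
    apply Filter.Eventually.of_forall
    intro t
    have h2 := hineq (x + t • e)
    simp only [add_sub_cancel_left, inner_smul_right] at h2
    simp only [zero_smul, add_zero, zero_mul, sub_zero]
    linarith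
  have h3 := hmin.hasDerivAt_eq_zero hψ
  have h4 : ⟪u' - g, u' - g⟫ = 0 := by
    rw [inner_sub_left, ← he]; linarith
  have h5 : u' - g = 0 := by rwa [inner_self_eq_zero] at h4
  exact sub_eq_zero.1 h5

/-- Descent lemma under Hölder gradient. -/
lemma descent {L v : ℝ} (hL : 0 < L) (hv : 0 < v) {f : E → ℝ} {f' : E → E}
    (hdiff : ∀ z, HasGradientAt f (f' z) z)
    (hHolder : ∀ a b, ‖f' a - f' b‖ ≤ L * ‖a - b‖ ^ v)
    (x e : E) (he : ‖e‖ = 1) (t : ℝ) (ht : 0 ≤ t) :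
    f (x + t • e) ≤ f x + t * ⟪f' x, e⟫ + L * t ^ (1 + v) / (1 + v) := by
  set h : ℝ → ℝ := fun s => f (x + s • e) - s * ⟪f' x, e⟫ - L * s ^ (1 + v) / (1 + v) with hdef
  have hder : ∀ s : ℝ, HasDerivAt h (⟪f' (x + s • e), e⟫ - ⟪f' x, e⟫ - L * s ^ v) s := by
    intro s
    have h1 := line_hasDerivAt (f := f) x e s (hdiff _)
    have h2 : HasDerivAt (fun s : ℝ => s * ⟪f' x, e⟫) ⟪f' x, e⟫ s := hasDerivAt_mul_const _
    have h3 : HasDerivAt (fun s : ℝ => L * s ^ (1 + v) / (1 + v)) (L * s ^ v) s := by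
      have h3' := ((Real.hasDerivAt_rpow_const (x := s) (p := 1 + v)
        (Or.inr (by linarith))).const_mul L).div_const (1 + v)
      have hvv : 1 + v - 1 = v := by ring
      rw [hvv, mul_comm (1 + v), ← mul_assoc,
        mul_div_cancel_right₀ _ (by linarith : (1:ℝ) + v ≠ 0)] at h3'
      exact h3'
    exact (h1.sub h2).sub h3
  have hanti : AntitoneOn h (Set.Ici (0:ℝ)) := by
    apply antitoneOn_of_deriv_nonpos (convex_Ici 0)
    · exact fun s _ => (hder s).differentiableAt.continuousAt.continuousWithinAt
    · exact fun s _ => (hder s).differentiableAt.differentiableWithinAt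
    · intro s hs
      rw [(hder s).deriv]
      rw [interior_Ici] at hs
      have h4 := hHolder (x + s • e) x
      have h5 : ‖x + s • e - x‖ = s := by
        simp [norm_smul, he, abs_of_nonneg (le_of_lt (Set.mem_Ioi.1 hs))]
      rw [h5] at h4
      have h6 : ⟪f' (x + s • e), e⟫ - ⟪f' x, e⟫ ≤ L * s ^ v := by
        rw [← inner_sub_left]
        calc ⟪f' (x + s • e) - f' x, e⟫ ≤ ‖f' (x + s • e) - f' x‖ * ‖e‖ :=
              real_inner_le_norm _ _
          _ ≤ L * s ^ v := by rw [he, mul_one]; exact h4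
      linarith
  have hfin := hanti Set.self_mem_Ici (Set.mem_Ici.2 ht) ht
  simp only [hdef, zero_smul, add_zero, zero_mul, sub_zero,
    Real.zero_rpow (by positivity : (1:ℝ) + v ≠ 0), mul_zero, zero_div] at hfin
  linarith

theorem stmt_3 (d : ℕ) (L v : ℝ) (hL : 0 < L) (hv : 0 < v) (hv1 : v ≤ 1)
    (f : EuclideanSpace ℝ (Fin d) → ℝ) (f' : EuclideanSpace ℝ (Fin d) → EuclideanSpace ℝ (Fin d))
    (hconv : ConvexOn ℝ Set.univ f)
    (hdiff : ∀ x, HasGradientAt f (f' x) x)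
    (hHolder : ∀ x y, ‖f' x - f' y‖ ≤ L * ‖x - y‖ ^ v)
    (fstar : EuclideanSpace ℝ (Fin d) → ℝ)
    (hfstar : ∀ u, IsLUB {r : ℝ | ∃ x, r = ⟪x, u⟫ - f x} (fstar u)) :
    ∀ u u' x, (∀ w, fstar w - fstar u' ≥ ⟪x, w - u'⟫) →
      fstar u - fstar u' ≥ ⟪x, u - u'⟫ +
        ((2 * v / (1 + v)) * (1 / L) ^ (1 / v) / 2) * ‖u - u'‖ ^ (1 + 1 / v) := by
  intro u u' x hsub
  by_cases huu : u = u'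
  · subst huu
    simp only [sub_self, inner_zero_right, norm_zero]
    rw [Real.zero_rpow (by positivity : (1:ℝ) + 1 / v ≠ 0), mul_zero, add_zero]
  have hn : (0:ℝ) < ‖u - u'‖ := by
    rw [norm_pos_iff]; exact sub_ne_zero.2 huu
  set n := ‖u - u'‖ with hndef
  have hmem : ∀ w y, ⟪y, w⟫ - f y ≤ fstar w := fun w y => (hfstar w).1 ⟨y, rfl⟩
  have hub : fstar (f' x) ≤ ⟪x, f' x⟫ - f x := by
    apply (hfstar (f' x)).2
    rintro r ⟨y, rfl⟩
    have h1 := grad_ineq hconv hdiff x y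
    have hsy : ⟪f' x, y - x⟫ = ⟪y, f' x⟫ - ⟪x, f' x⟫ := by
      rw [real_inner_comm, inner_sub_left]
    linarith
  have hlow : ⟪x, u'⟫ - f x ≤ fstar u' := hmem u' x
  have hup : fstar u' ≤ ⟪x, u'⟫ - f x := by
    have h1 := hsub (f' x)
    have h2 : ⟪x, f' x - u'⟫ = ⟪x, f' x⟫ - ⟪x, u'⟫ := inner_sub_right _ _ _
    linarith
  have heq : fstar u' = ⟪x, u'⟫ - f x := le_antisymm hup hlow
  have hu' : u' = f' x := by
    apply subgrad_eq (hdiff x)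
    intro y
    have h1 := hmem u' y
    rw [heq] at h1
    have h2 : ⟪u', y - x⟫ = ⟪y, u'⟫ - ⟪x, u'⟫ := by
      rw [real_inner_comm, inner_sub_left]
    linarith
  set e := ‖u - u'‖⁻¹ • (u - u') with hedef
  have he : ‖e‖ = 1 := by
    rw [hedef, norm_smul]
    simp only [norm_inv, norm_norm]
    exact inv_mul_cancel₀ hn.ne'
  set t := (n / L) ^ ((1:ℝ) / v) with htdef
  have ht : 0 < t := Real.rpow_pos_of_pos (div_pos hn hL) _
  have hdes := descent hL hv hdiff hHolder x e he t ht.le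
  rw [← hu'] at hdes
  have hfu : ⟪x + t • e, u⟫ - f (x + t • e) ≤ fstar u := hmem u _
  have hieu : ⟪e, u - u'⟫ = n := by
    rw [hedef, real_inner_smul_left, real_inner_self_eq_norm_mul_norm, ← hndef]
    field_simp
  have hsplit : ⟪x + t • e, u⟫ = ⟪x, u⟫ + t * ⟪e, u⟫ := by
    rw [inner_add_left, real_inner_smul_left]
  have hxsub : ⟪x, u - u'⟫ = ⟪x, u⟫ - ⟪x, u'⟫ := inner_sub_right _ _ _
  have hcomm : t * ⟪u', e⟫ = t * ⟪e, u'⟫ := by rw [real_inner_comm]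
  have hprod : t * ⟪e, u⟫ - t * ⟪e, u'⟫ = t * n := by
    rw [← mul_sub, ← inner_sub_right, hieu]
  have key1 : fstar u - fstar u' - ⟪x, u - u'⟫ ≥ t * n - L * t ^ (1 + v) / (1 + v) := by
    rw [heq, hxsub]
    linarith
  have hA : t = n ^ ((1:ℝ)/v) * (1/L) ^ ((1:ℝ)/v) := by
    rw [htdef, div_eq_mul_inv, ← one_div, Real.mul_rpow hn.le (by positivity)]
  have h1 : t * n = n ^ (1 + 1/v) * (1/L) ^ ((1:ℝ)/v) := by
    rw [hA, add_comm, Real.rpow_add hn, Real.rpow_one]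
    ring
  have h2 : L * t ^ (1 + v) = n ^ (1 + 1/v) * (1/L) ^ ((1:ℝ)/v) := by
    rw [hA, Real.mul_rpow (by positivity) (by positivity),
      ← Real.rpow_mul hn.le, ← Real.rpow_mul (by positivity)]
    have hexp : 1 / v * (1 + v) = 1 + 1 / v := by field_simp; ring
    rw [hexp, Real.rpow_add (by positivity : (0:ℝ) < 1 / L), Real.rpow_one]
    field_simp
  have key2 : t * n - L * t ^ (1 + v) / (1 + v) =
      ((2 * v / (1 + v)) * (1 / L) ^ ((1:ℝ) / v) / 2) * n ^ (1 + 1 / v) := by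
    rw [h1, h2]
    field_simp
    ring
  linarith
end

section
/- Suppose g : ℝ^d → ℝ is L_g-smooth (gradient L_g-Lipschitz), ℓ : ℝ^d → ℝ^m is differentiable with ‖∇ℓ(x)‖ ≤ G_ℓ (Jacobian spectral norm bound) and ∇ℓ is L_ℓ-Lipschitz, and all y in a set Y satisfy ‖y‖ ≤ D_y. Define f₀(x, y) = g(x) - ⟨y, ℓ(x)⟩. Then for all x, x' and y, y' ∈ Y: ‖∇_x f₀(x,y) - ∇_x f₀(x',y')‖² + ‖∇_y f₀(x,y) - ∇_y f₀(x',y')‖² ≤ L²(‖x - x'‖² + ‖y - y'‖²), where L = sqrt(max(2L_g² + 4L_ℓ²D_y² + G_ℓ², 4G_ℓ²)). -/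
/-!
Split `∇ₓf₀(x,y) - ∇ₓf₀(x',y')` as `(∇g x - ∇g x') - (∇ℓ x - ∇ℓ x')ᵀ y - (∇ℓ x')ᵀ (y - y')`;
since the adjoint is an isometry, the triangle inequality bounds its norm by
`L_g‖x - x'‖ + L_ℓ D_y‖x - x'‖ + G_ℓ‖y - y'‖`, while the mean value theorem gives
`‖ℓ x - ℓ x'‖ ≤ G_ℓ‖x - x'‖`. Squaring with `(p + q + r)² ≤ 2p² + 4q² + 4r²` yields the constant.
-/

open RealInnerProductSpace

theorem ContinuousLinearMap.norm_adjoint_apply_sub_adjoint_apply_le {𝕜 E F : Type*} [RCLike 𝕜]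
    [NormedAddCommGroup E] [InnerProductSpace 𝕜 E] [CompleteSpace E]
    [NormedAddCommGroup F] [InnerProductSpace 𝕜 F] [CompleteSpace F]
    (A A' : E →L[𝕜] F) (y y' : F) :
    ‖adjoint A y - adjoint A' y'‖ ≤ ‖A - A'‖ * ‖y‖ + ‖A'‖ * ‖y - y'‖ := by
  have hsplit : adjoint A y - adjoint A' y' = adjoint (A - A') y + adjoint A' (y - y') := by
    simp only [map_sub, sub_apply]
    abel
  calc ‖adjoint A y - adjoint A' y'‖
      ≤ ‖adjoint (A - A') y‖ + ‖adjoint A' (y - y')‖ := hsplit ▸ norm_add_le _ _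
    _ ≤ ‖adjoint (A - A')‖ * ‖y‖ + ‖adjoint A'‖ * ‖y - y'‖ :=
        add_le_add (le_opNorm _ _) (le_opNorm _ _)
    _ = ‖A - A'‖ * ‖y‖ + ‖A'‖ * ‖y - y'‖ := by simp only [adjoint.norm_map]

theorem norm_sub_adjoint_sub_sub_adjoint_le {E F : Type*}
    [NormedAddCommGroup E] [InnerProductSpace ℝ E] [CompleteSpace E]
    [NormedAddCommGroup F] [InnerProductSpace ℝ F] [CompleteSpace F]
    {u u' x x' : E} {A A' : E →L[ℝ] F} {y : F} {Lu G LA D : ℝ}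
    (hu : ‖u - u'‖ ≤ Lu * ‖x - x'‖) (hA' : ‖A'‖ ≤ G) (hA : ‖A - A'‖ ≤ LA * ‖x - x'‖)
    (hy : ‖y‖ ≤ D) (y' : F) :
    ‖(u - ContinuousLinearMap.adjoint A y) - (u' - ContinuousLinearMap.adjoint A' y')‖ ≤
      Lu * ‖x - x'‖ + LA * ‖x - x'‖ * D + G * ‖y - y'‖ := by
  have hadj := A.norm_adjoint_apply_sub_adjoint_apply_le A' y y'
  have hAy : ‖A - A'‖ * ‖y‖ ≤ LA * ‖x - x'‖ * D :=
    mul_le_mul hA hy (norm_nonneg _) ((norm_nonneg _).trans hA)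
  have hA'y : ‖A'‖ * ‖y - y'‖ ≤ G * ‖y - y'‖ := mul_le_mul_of_nonneg_right hA' (norm_nonneg _)
  rw [sub_sub_sub_comm]
  linarith [norm_sub_le (u - u') (ContinuousLinearMap.adjoint A y - ContinuousLinearMap.adjoint A' y')]

theorem sq_add_add_le (p q r : ℝ) : (p + q + r) ^ 2 ≤ 2 * p ^ 2 + 4 * q ^ 2 + 4 * r ^ 2 := by
  nlinarith [sq_nonneg (p - q - r), sq_nonneg (q - r)]

theorem stmt_6_general (d m : ℕ) (Lg Gℓ Lℓ Dy : ℝ)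
    (g' : EuclideanSpace ℝ (Fin d) → EuclideanSpace ℝ (Fin d))
    (ℓ : EuclideanSpace ℝ (Fin d) → EuclideanSpace ℝ (Fin m))
    (Dℓ : EuclideanSpace ℝ (Fin d) → (EuclideanSpace ℝ (Fin d) →L[ℝ] EuclideanSpace ℝ (Fin m)))
    (Y : Set (EuclideanSpace ℝ (Fin m)))
    (hgL : ∀ x x', ‖g' x - g' x'‖ ≤ Lg * ‖x - x'‖)
    (hℓ : ∀ x, HasFDerivAt ℓ (Dℓ x) x)
    (hGℓ : ∀ x, ‖Dℓ x‖ ≤ Gℓ)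
    (hLℓ : ∀ x x', ‖Dℓ x - Dℓ x'‖ ≤ Lℓ * ‖x - x'‖)
    (hY : ∀ y ∈ Y, ‖y‖ ≤ Dy) :
    ∀ x x' : EuclideanSpace ℝ (Fin d), ∀ y ∈ Y, ∀ y' ∈ Y,
      ‖(g' x - ContinuousLinearMap.adjoint (Dℓ x) y) -
        (g' x' - ContinuousLinearMap.adjoint (Dℓ x') y')‖ ^ 2 +
      ‖(-ℓ x) - (-ℓ x')‖ ^ 2 ≤
      (Real.sqrt (max (2 * Lg ^ 2 + 4 * Lℓ ^ 2 * Dy ^ 2 + Gℓ ^ 2) (4 * Gℓ ^ 2))) ^ 2 *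
        (‖x - x'‖ ^ 2 + ‖y - y'‖ ^ 2) := by
  intro x x' y hy y' _
  set A := ‖x - x'‖
  set B := ‖y - y'‖
  have hx := norm_sub_adjoint_sub_sub_adjoint_le (hgL x x') (hGℓ x') (hLℓ x x') (hY y hy) y'
  have hℓ_lip : ‖ℓ x - ℓ x'‖ ≤ Gℓ * A :=
    convex_univ.norm_image_sub_le_of_norm_hasFDerivWithin_le (fun z _ => (hℓ z).hasFDerivWithinAt)
      (fun z _ => hGℓ z) (Set.mem_univ x') (Set.mem_univ x)
  have hGℓ0 : 0 ≤ Gℓ := (norm_nonneg _).trans (hGℓ 0)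
  rw [Real.sq_sqrt (le_max_of_le_right (by positivity)), neg_sub_neg, norm_sub_rev (ℓ x')]
  calc _ ≤ (Lg * A + Lℓ * A * Dy + Gℓ * B) ^ 2 + (Gℓ * A) ^ 2 := by
        gcongr
    _ ≤ (2 * Lg ^ 2 + 4 * Lℓ ^ 2 * Dy ^ 2 + Gℓ ^ 2) * A ^ 2 + 4 * Gℓ ^ 2 * B ^ 2 := by
        nlinarith [sq_add_add_le (Lg * A) (Lℓ * A * Dy) (Gℓ * B)]
    _ ≤ _ := by
        rw [mul_add]
        gcongr
        exacts [le_max_left _ _, le_max_right _ _]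

theorem stmt_6 (d m : ℕ) (Lg Gℓ Lℓ Dy : ℝ)
    (g : EuclideanSpace ℝ (Fin d) → ℝ) (g' : EuclideanSpace ℝ (Fin d) → EuclideanSpace ℝ (Fin d))
    (ℓ : EuclideanSpace ℝ (Fin d) → EuclideanSpace ℝ (Fin m))
    (Dℓ : EuclideanSpace ℝ (Fin d) → (EuclideanSpace ℝ (Fin d) →L[ℝ] EuclideanSpace ℝ (Fin m)))
    (Y : Set (EuclideanSpace ℝ (Fin m)))
    (hg : ∀ x, HasGradientAt g (g' x) x)
    (hgL : ∀ x x', ‖g' x - g' x'‖ ≤ Lg * ‖x - x'‖)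
    (hℓ : ∀ x, HasFDerivAt ℓ (Dℓ x) x)
    (hGℓ : ∀ x, ‖Dℓ x‖ ≤ Gℓ)
    (hLℓ : ∀ x x', ‖Dℓ x - Dℓ x'‖ ≤ Lℓ * ‖x - x'‖)
    (hY : ∀ y ∈ Y, ‖y‖ ≤ Dy) :
    ∀ x x' : EuclideanSpace ℝ (Fin d), ∀ y ∈ Y, ∀ y' ∈ Y,
      ‖(g' x - ContinuousLinearMap.adjoint (Dℓ x) y) -
        (g' x' - ContinuousLinearMap.adjoint (Dℓ x') y')‖ ^ 2 +
      ‖(-ℓ x) - (-ℓ x')‖ ^ 2 ≤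
      (Real.sqrt (max (2 * Lg ^ 2 + 4 * Lℓ ^ 2 * Dy ^ 2 + Gℓ ^ 2) (4 * Gℓ ^ 2))) ^ 2 *
        (‖x - x'‖ ^ 2 + ‖y - y'‖ ^ 2) :=
  stmt_6_general d m Lg Gℓ Lℓ Dy g' ℓ Dℓ Y hgL hℓ hGℓ hLℓ hY
end
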